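/- Let A ~ PE(a, b, n-(a+b)) be Pólya-Eggenberger distributed with 1 ≤ a ≤ b. Then for a sufficiently large constant c_p > 1, Pr[A > (n/(a+b))·(3a + c_p·log n)] < 2n^(-2). -/

import Mathlib

/-- Probability that the Pólya–Eggenberger process starting with `a` red and
`b` blue balls adds exactly `j` red balls during `m` steps. -/
noncomputable def pePMF (a b m j : ℕ) : ℝ :=
  (m.choose j : ℝ) * (Nat.ascFactorial a j : ℝ) * (Nat.ascFactorial b (m - j) : ℝ) /
    (Nat.ascFactorial (a + b) m : ℝ)

/-- `Pr[PE(a,b,m) > t]`: the total number of red balls is above `t`. -/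
noncomputable def peTailGT (a b m : ℕ) (t : ℝ) : ℝ :=
  ∑ j ∈ Finset.range (m + 1), if t < ((a + j : ℕ) : ℝ) then pePMF a b m j else 0

/-!
Markov's inequality for a binomial moment. If `X` is the number of red balls added in `m` steps,
then `E[C(X, J)] = C(m, J) a^(J) / (a+b)^(J)` in rising factorials (Chu–Vandermonde for rising
factorials), so `Pr[X ≥ K] ≤ E[C(X, J)] / C(K, J) = ∏_{i<J} (m-i)(a+i) / ((K-i)(a+b+i))`.
With `L = 3a + 9 log n`, `K = ⌈(n/(a+b)) L - a⌉` and `J = ⌊3 log n⌋` every factor is at most `1/2`,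
because `3(a + J) ≤ L`, and `2^(-J) < 2 n^(-2)`.
-/

open Finset Polynomial

theorem Nat.ascFactorial_add_eq_sum (x y N : ℕ) :
    (x + y).ascFactorial N =
      ∑ k ∈ range (N + 1), N.choose k * (x.ascFactorial k * y.ascFactorial (N - k)) := by
  -- A rising factorial is a signed falling factorial at `-z`, so this is Chu–Vandermonde.
  have rising : ∀ z k : ℕ,
      (z.ascFactorial k : ℤ) = (-1) ^ k * (descPochhammer ℤ k).smeval (-z : ℤ) := fun z k => by
    rw [Nat.cast_ascFactorial, ← eval_eq_smeval, ← ascPochhammer_eval_neg_eq_descPochhammer,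
      neg_neg]
  have vandermonde := Ring.descPochhammer_smeval_add N (Commute.all (-x : ℤ) (-y))
  rw [Nat.sum_antidiagonal_eq_sum_range_succ fun i j => (N.choose i : ℤ) *
    ((descPochhammer ℤ i).smeval (-x : ℤ) * (descPochhammer ℤ j).smeval (-y : ℤ))] at vandermonde
  apply Nat.cast_injective (R := ℤ)
  push_cast
  rw [rising, Nat.cast_add, neg_add, vandermonde, mul_sum]
  refine sum_congr rfl fun k hk => ?_
  have hk : k ≤ N := Nat.lt_succ_iff.mp (mem_range.mp hk)
  rw [rising, rising]
  obtain ⟨j, rfl⟩ := Nat.exists_eq_add_of_le hk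
  simp only [Nat.add_sub_cancel_left, pow_add]
  ring

theorem sum_choose_mul_choose_mul_ascFactorial {a b m J : ℕ} (hJ : J ≤ m) :
    ∑ i ∈ range (m + 1), i.choose J * (m.choose i * (a.ascFactorial i * b.ascFactorial (m - i)))
      = m.choose J * (a.ascFactorial J * (a + J + b).ascFactorial (m - J)) := by
  obtain ⟨l, rfl⟩ := Nat.exists_eq_add_of_le hJ
  have hlow : ∑ i ∈ range J,
      i.choose J * ((J + l).choose i * (a.ascFactorial i * b.ascFactorial (J + l - i))) = 0 :=
    sum_eq_zero fun i hi => by rw [Nat.choose_eq_zero_of_lt (mem_range.mp hi), zero_mul]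
  rw [show J + l + 1 = J + (l + 1) by ring, sum_range_add, hlow, zero_add,
    Nat.add_sub_cancel_left, Nat.ascFactorial_add_eq_sum, mul_sum, mul_sum]
  refine sum_congr rfl fun k hk => ?_
  have hk : k ≤ l := Nat.lt_succ_iff.mp (mem_range.mp hk)
  have hchoose : (J + l).choose (J + k) * (J + k).choose J = (J + l).choose J * l.choose k := by
    simpa using Nat.choose_mul (n := J + l) (k := J + k) (s := J) (by omega)
  rw [← Nat.ascFactorial_mul_ascFactorial a J k, show J + l - (J + k) = l - k by omega]
  calc _ = (J + l).choose (J + k) * (J + k).choose J * a.ascFactorial J *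
        ((a + J).ascFactorial k * b.ascFactorial (l - k)) := by ring
    _ = _ := by rw [hchoose]; ring

theorem pePMF_nonneg (a b m j : ℕ) : 0 ≤ pePMF a b m j := by
  unfold pePMF
  positivity

theorem sum_choose_mul_pePMF {a b : ℕ} (hab : 0 < a + b) (m J : ℕ) :
    ∑ i ∈ range (m + 1), (i.choose J : ℝ) * pePMF a b m i
      = m.choose J * a.ascFactorial J / (a + b).ascFactorial J := by
  rcases le_or_gt J m with hJ | hJ
  · obtain ⟨c, hc⟩ := Nat.exists_eq_add_one_of_ne_zero (n := a + b + J) (by omega)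
    have hpos : (0 : ℝ) < (a + b + J).ascFactorial (m - J) := by
      rw [hc]; exact_mod_cast Nat.ascFactorial_pos c _
    have hsplit : (a + b).ascFactorial m =
        (a + b).ascFactorial J * (a + b + J).ascFactorial (m - J) := by
      rw [Nat.ascFactorial_mul_ascFactorial, Nat.add_sub_cancel' hJ]
    calc ∑ i ∈ range (m + 1), (i.choose J : ℝ) * pePMF a b m i
        = ((∑ i ∈ range (m + 1), i.choose J *
            (m.choose i * (a.ascFactorial i * b.ascFactorial (m - i))) : ℕ) : ℝ) /
            (a + b).ascFactorial m := by
          rw [Nat.cast_sum, sum_div]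
          refine sum_congr rfl fun i _ => ?_
          unfold pePMF
          push_cast
          ring
      _ = _ := by
          rw [sum_choose_mul_choose_mul_ascFactorial hJ, hsplit, show a + J + b = a + b + J by ring]
          push_cast
          field_simp
  · have hzero : ∀ i ∈ range (m + 1), (i.choose J : ℝ) * pePMF a b m i = 0 := fun i hi => by
      rw [Nat.choose_eq_zero_of_lt (by simp at hi; omega), Nat.cast_zero, zero_mul]
    rw [sum_eq_zero hzero, Nat.choose_eq_zero_of_lt hJ]
    simp

theorem peTailGT_mul_choose_le {a b m J K : ℕ} {t : ℝ}
    (hK : ∀ i : ℕ, t < ((a + i : ℕ) : ℝ) → K ≤ i) :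
    peTailGT a b m t * K.choose J ≤ ∑ i ∈ range (m + 1), (i.choose J : ℝ) * pePMF a b m i := by
  rw [peTailGT, sum_mul]
  refine sum_le_sum fun i _ => ?_
  split_ifs with h
  · rw [mul_comm]
    gcongr
    · exact pePMF_nonneg a b m i
    · exact hK i h
  · rw [zero_mul]
    exact mul_nonneg (Nat.cast_nonneg _) (pePMF_nonneg a b m i)

theorem choose_mul_ascFactorial_le_pow_mul {m a K s J : ℕ} {r : ℝ}
    (h : ∀ i < J, (((m - i) * (a + i) : ℕ) : ℝ) ≤ r * ((K - i) * (s + i) : ℕ)) :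
    (m.choose J * a.ascFactorial J : ℝ) ≤ r ^ J * (K.choose J * s.ascFactorial J) := by
  have hprod : ∀ n c : ℕ, (J.factorial : ℝ) * (n.choose J * c.ascFactorial J)
      = ∏ i ∈ range J, (((n - i) * (c + i) : ℕ) : ℝ) := fun n c => by
    rw [← Nat.cast_prod, prod_mul_distrib, ← Nat.descFactorial_eq_prod_range,
      ← Nat.ascFactorial_eq_prod_range, Nat.descFactorial_eq_factorial_mul_choose]
    push_cast
    ring
  refine le_of_mul_le_mul_left ?_ (Nat.cast_pos.mpr J.factorial_pos)
  calc (J.factorial : ℝ) * (m.choose J * a.ascFactorial J)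
      = ∏ i ∈ range J, (((m - i) * (a + i) : ℕ) : ℝ) := hprod m a
    _ ≤ ∏ i ∈ range J, (r * ((K - i) * (s + i) : ℕ)) :=
        prod_le_prod (fun _ _ => Nat.cast_nonneg _) fun i hi => h i (mem_range.mp hi)
    _ = J.factorial * (r ^ J * (K.choose J * s.ascFactorial J)) := by
        rw [prod_mul_distrib, prod_const, card_range, ← hprod]
        ring

theorem peTailGT_le_pow {a b m J K : ℕ} {t r : ℝ} (hab : 0 < a + b)
    (hK : ∀ i : ℕ, t < ((a + i : ℕ) : ℝ) → K ≤ i) (hJK : J ≤ K)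
    (hr : ∀ i < J, (((m - i) * (a + i) : ℕ) : ℝ) ≤ r * ((K - i) * (a + b + i) : ℕ)) :
    peTailGT a b m t ≤ r ^ J := by
  have hC : (0 : ℝ) < K.choose J := Nat.cast_pos.mpr (Nat.choose_pos hJK)
  obtain ⟨c, hc⟩ := Nat.exists_eq_add_one_of_ne_zero (n := a + b) (by omega)
  have hS : (0 : ℝ) < (a + b).ascFactorial J := by
    rw [hc]; exact_mod_cast Nat.ascFactorial_pos c _
  rw [← mul_le_mul_iff_of_pos_right (mul_pos hC hS)]
  calc peTailGT a b m t * (K.choose J * (a + b).ascFactorial J)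
      = peTailGT a b m t * K.choose J * (a + b).ascFactorial J := by ring
    _ ≤ m.choose J * a.ascFactorial J / (a + b).ascFactorial J * (a + b).ascFactorial J := by
        gcongr
        exact (peTailGT_mul_choose_le hK).trans (sum_choose_mul_pePMF hab m J).le
    _ = m.choose J * a.ascFactorial J := div_mul_cancel₀ _ hS.ne'
    _ ≤ r ^ J * (K.choose J * (a + b).ascFactorial J) := choose_mul_ascFactorial_le_pow_mul hr

theorem peTailGT_le_half_pow {a b n J : ℕ} {L : ℝ} (hab : 0 < a + b) (hn : a + b ≤ n)
    (hJ : 3 * ((a : ℝ) + J) ≤ L) :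
    peTailGT a b (n - (a + b)) ((n : ℝ) / ((a : ℝ) + b) * L) ≤ (1 / 2) ^ J := by
  set s : ℝ := (a : ℝ) + b with hs_def
  set K := ⌈(n : ℝ) / s * L - a⌉₊
  have hs : 0 < s := by rw [hs_def]; exact_mod_cast hab
  have hsn : s ≤ n := by rw [hs_def]; exact_mod_cast hn
  have hnL : n / s * L * s = n * L := by field_simp
  have hL : L ≤ n / s * L := le_mul_of_one_le_left (by linarith) ((one_le_div hs).mpr hsn)
  have hK : (n : ℝ) / s * L - a ≤ K := Nat.le_ceil _
  have hJK : J ≤ K := by exact_mod_cast (show (J : ℝ) ≤ K by linarith)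
  refine peTailGT_le_pow hab (fun i hi => Nat.ceil_le.mpr (by push_cast at hi; linarith)) hJK
    fun i hi => ?_
  have hiK : i ≤ K := hi.le.trans hJK
  have hm : ((n - (a + b) - i : ℕ) : ℝ) ≤ n := by
    exact_mod_cast (by omega : n - (a + b) - i ≤ n)
  have hiJ : (i : ℝ) ≤ J := by exact_mod_cast hi.le
  calc (((n - (a + b) - i) * (a + i) : ℕ) : ℝ)
      ≤ n * (a + J) := by push_cast; gcongr
    _ ≤ 1 / 2 * (n * L - (a + J) * n) := by nlinarith
    _ ≤ 1 / 2 * ((n / s * L - (a + J)) * s) := by rw [sub_mul, hnL]; nlinarith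
    _ ≤ 1 / 2 * ((K - J) * s) := by gcongr 1 / 2 * (?_ * s); linarith
    _ ≤ 1 / 2 * (((K - i) * (a + b + i) : ℕ) : ℝ) := by
        push_cast [Nat.cast_sub hiK]
        gcongr
        all_goals linarith

theorem half_pow_floor_three_mul_log_lt {x : ℝ} (hx : 1 ≤ x) :
    (1 / 2 : ℝ) ^ ⌊3 * Real.log x⌋₊ < 2 / x ^ 2 := by
  set J := ⌊3 * Real.log x⌋₊
  have hlog : 0 ≤ Real.log x := Real.log_nonneg hx
  have hJ : 3 * Real.log x < J + 1 := Nat.lt_floor_add_one _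
  have hlog2 := Real.log_two_gt_d9
  have hsq : x ^ 2 < 2 ^ (J + 1) := by
    rw [← Real.exp_log (by positivity : 0 < x ^ 2),
      ← Real.exp_log (by positivity : (0 : ℝ) < 2 ^ (J + 1)), Real.exp_lt_exp, Real.log_pow,
      Real.log_pow]
    push_cast
    nlinarith
  rw [lt_div_iff₀ (by positivity)]
  calc (1 / 2 : ℝ) ^ J * x ^ 2 < (1 / 2) ^ J * 2 ^ (J + 1) := by gcongr
    _ = 2 := by rw [pow_succ, ← mul_assoc, ← mul_pow]; norm_num

/-- Tail bound for the Pólya–Eggenberger distribution with small initial red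
count: for a sufficiently large constant `c_p > 1`,
`Pr[PE(a,b,n-(a+b)) > (n/(a+b))·(3a + c_p·log n)] < 2n⁻²`. -/
theorem polya_eggenberger_small_support_tail :
    ∃ cp : ℝ, 1 < cp ∧
      ∀ a b n : ℕ, 1 ≤ a → a ≤ b → a + b ≤ n →
        peTailGT a b (n - (a + b))
            (((n : ℝ) / ((a : ℝ) + b)) * (3 * (a : ℝ) + cp * Real.log n)) <
          2 / (n : ℝ) ^ 2 := by
  refine ⟨9, by norm_num, fun a b n ha _ hn => ?_⟩
  have hn1 : (1 : ℝ) ≤ n := by exact_mod_cast (by omega : 1 ≤ n)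
  have hJ : (⌊3 * Real.log n⌋₊ : ℝ) ≤ 3 * Real.log n :=
    Nat.floor_le (mul_nonneg (by norm_num) (Real.log_nonneg hn1))
  calc peTailGT a b (n - (a + b)) ((n : ℝ) / ((a : ℝ) + b) * (3 * (a : ℝ) + 9 * Real.log n))
      ≤ (1 / 2) ^ ⌊3 * Real.log n⌋₊ := peTailGT_le_half_pow (by omega) hn (by linarith)
    _ < 2 / (n : ℝ) ^ 2 := half_pow_floor_three_mul_log_lt hn1
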